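/- arXiv:2010.12215 — 3 statements merged into one kernel-verified Lean document; each statement's English description precedes it below -/
import Mathlib

section
/- Let E be a Dedekind complete Riesz space with weak order unit e, (f_n)_{n≥0} an order bounded sequence in the positive cone E_+, and (P_n)_{n≥0} a density zero sequence of band projections on E (i.e. (1/n) ∑_{k=0}^{n-1} P_k e → 0 in order). If (I − P_n) f_n → 0 in order as n → ∞, then (1/n) ∑_{k=0}^{n-1} f_k → 0 in order as n → ∞. -/
open Filter Finset

/-- Order convergence of a sequence in a Riesz space: there is a sequence
decreasing to `0` dominating `|x n - l|`. -/
def OrderConvergesTo {E : Type*} [Lattice E] [AddCommGroup E] (x : ℕ → E) (l : E) : Prop :=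
  ∃ y : ℕ → E, Antitone y ∧ IsGLB (Set.range y) (0 : E) ∧ ∀ n, |x n - l| ≤ y n

/-- A band (order) projection: a linear idempotent `P` with `0 ≤ P f ≤ f` for `f ≥ 0`. -/
def IsBandProjection {E : Type*} [Lattice E] [AddCommGroup E] [Module ℝ E]
    (P : Module.End ℝ E) : Prop :=
  P * P = P ∧ ∀ f : E, 0 ≤ f → 0 ≤ P f ∧ P f ≤ f

/-- `e` is a weak order unit. -/
def IsWeakOrderUnit {E : Type*} [Lattice E] [AddCommGroup E] (e : E) : Prop :=
  0 < e ∧ ∀ f : E, 0 ≤ f → f ⊓ e = 0 → f = 0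


/-!
Write `f k = P k (f k) + (1 - P k) (f k)`. As `P k` is a positive projection, for every `j`
`P k (f k) ≤ P k (g ⊓ j • e) + P k (g - g ⊓ j • e) ≤ j • P k e + (g - g ⊓ j • e)`, so the
Cesàro mean of `f` is at most `j` times the mean of `P k e`, plus `g - g ⊓ j • e`, plus the mean
of `(1 - P k) (f k)`. The first and last terms are order null (density zero, and Cesàro means of
an order bounded order null sequence), while `g - g ⊓ j • e ↓ 0` as `j → ∞` because `e` is a weak
unit and `E` is Dedekind complete. The infimum over `j` of these bounds is a single sequence
decreasing to `0` that dominates the Cesàro means of `f`.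
-/

section DecreasesToZero

variable {E : Type*}

def DecreasesToZero [Preorder E] [Zero E] (y : ℕ → E) : Prop :=
  Antitone y ∧ IsGLB (Set.range y) 0

theorem DecreasesToZero.nonneg [Preorder E] [Zero E] {y : ℕ → E} (hy : DecreasesToZero y)
    (n : ℕ) : 0 ≤ y n :=
  hy.2.1 ⟨n, rfl⟩

theorem DecreasesToZero.le_zero [Preorder E] [Zero E] {y : ℕ → E} (hy : DecreasesToZero y)
    {b : E} (hb : ∀ n, b ≤ y n) : b ≤ 0 :=
  hy.2.2 (Set.forall_mem_range.2 hb)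

theorem orderConvergesTo_zero_iff [Lattice E] [AddCommGroup E] {x : ℕ → E} :
    OrderConvergesTo x 0 ↔ ∃ y, DecreasesToZero y ∧ ∀ n, |x n| ≤ y n := by
  simp only [OrderConvergesTo, DecreasesToZero, sub_zero, and_assoc]

variable [PartialOrder E] [AddCommGroup E]

theorem DecreasesToZero.const_smul [Module ℝ E] [PosSMulMono ℝ E] {y : ℕ → E}
    (hy : DecreasesToZero y) {c : ℝ} (hc : 0 ≤ c) : DecreasesToZero (c • y) := by
  refine ⟨hy.1.const_smul hc, Set.forall_mem_range.2 fun n => smul_nonneg hc (hy.nonneg n),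
    fun b hb => ?_⟩
  rcases hc.eq_or_lt with rfl | hc
  · simpa using hb ⟨0, rfl⟩
  · have : c⁻¹ • b ≤ 0 := hy.le_zero fun n => (inv_smul_le_iff_of_pos hc).2 (hb ⟨n, rfl⟩)
    exact (smul_nonpos_iff_nonpos_of_pos_left (inv_pos.2 hc)).1 this

theorem DecreasesToZero.add [IsOrderedAddMonoid E] {y y' : ℕ → E} (hy : DecreasesToZero y)
    (hy' : DecreasesToZero y') : DecreasesToZero (y + y') := by
  refine ⟨hy.1.add hy'.1, Set.forall_mem_range.2 fun n => add_nonneg (hy.nonneg n) (hy'.nonneg n),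
    fun b hb => hy'.le_zero fun m => ?_⟩
  have hb_sub : b - y' m ≤ 0 := hy.le_zero fun n => by
    rw [sub_le_iff_le_add]
    exact (hb ⟨max n m, rfl⟩).trans
      (add_le_add (hy.1 (le_max_left n m)) (hy'.1 (le_max_right n m)))
  exact sub_nonpos.1 hb_sub

end DecreasesToZero

section DedekindComplete

variable {E : Type*} [ConditionallyCompleteLattice E] [AddCommGroup E] [IsOrderedAddMonoid E]

theorem orderConvergesTo_zero_of_abs_le_add {ι : Type*} [Nonempty ι] {x : ℕ → E}
    {u : ι → ℕ → E} {c : ι → E} (hu : ∀ i, DecreasesToZero (u i)) (hc : IsGLB (Set.range c) 0)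
    (hx : ∀ i n, |x n| ≤ u i n + c i) : OrderConvergesTo x 0 := by
  have hbdd : ∀ n, BddBelow (Set.range fun i => u i n + c i) :=
    fun n => ⟨|x n|, Set.forall_mem_range.2 fun i => hx i n⟩
  refine orderConvergesTo_zero_iff.2
    ⟨fun n => ⨅ i, (u i n + c i), ⟨?_, ?_⟩, fun n => le_ciInf (hx · n)⟩
  · exact fun m n hmn => le_ciInf fun i =>
      (ciInf_le (hbdd n) i).trans (add_le_add_left ((hu i).1 hmn) _)
  · refine ⟨Set.forall_mem_range.2 fun n => (abs_nonneg _).trans (le_ciInf (hx · n)),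
      fun b hb => hc.2 (Set.forall_mem_range.2 fun i => ?_)⟩
    have : b - c i ≤ 0 := (hu i).le_zero fun n =>
      sub_le_iff_le_add.2 ((hb ⟨n, rfl⟩).trans (ciInf_le (hbdd n) i))
    exact sub_nonpos.1 this

variable [Module ℝ E]

theorem IsWeakOrderUnit.isLUB_inf_natCast_smul {e : E} (he : IsWeakOrderUnit e) (g : E) :
    IsLUB (Set.range fun j : ℕ => g ⊓ (j : ℝ) • e) g := by
  set q : ℕ → E := fun j => g ⊓ (j : ℝ) • e
  have hbdd : BddAbove (Set.range q) := ⟨g, Set.forall_mem_range.2 fun j => inf_le_left⟩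
  set s := ⨆ j, q j
  have hsg : s ≤ g := ciSup_le fun j => inf_le_left
  have hstep : ∀ j, q j + (g - q j) ⊓ e = q (j + 1) := fun j => by
    rw [add_inf, add_sub_cancel, inf_add, ← inf_assoc,
      inf_eq_left.2 (le_add_of_nonneg_right he.1.le)]
    simp only [q, Nat.cast_succ, add_smul, one_smul]
  -- adding `(g - s) ⊓ e` to any `q j` stays below `q (j + 1) ≤ s`, so `(g - s) ⊓ e = 0`
  have hdisj : (g - s) ⊓ e ≤ 0 := by
    have : s ≤ s - (g - s) ⊓ e := ciSup_le fun j => le_sub_iff_add_le.2 <|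
      calc q j + (g - s) ⊓ e ≤ q j + (g - q j) ⊓ e := by
            gcongr
            exact le_ciSup hbdd j
        _ = q (j + 1) := hstep j
        _ ≤ s := le_ciSup hbdd (j + 1)
    simpa using this
  have hgs : g - s = 0 := he.2 _ (sub_nonneg.2 hsg)
    (le_antisymm hdisj (le_inf (sub_nonneg.2 hsg) he.1.le))
  rw [sub_eq_zero] at hgs
  exact ⟨Set.forall_mem_range.2 fun j => inf_le_left,
    fun b hb => hgs ▸ ciSup_le fun j => hb ⟨j, rfl⟩⟩

variable [PosSMulMono ℝ E]

theorem decreasesToZero_inv_succ_smul {g : E} (hg : 0 ≤ g) :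
    DecreasesToZero fun n : ℕ => ((n : ℝ) + 1)⁻¹ • g := by
  have hnonneg : ∀ n : ℕ, 0 ≤ ((n : ℝ) + 1)⁻¹ • g := fun n => smul_nonneg (by positivity) hg
  refine ⟨fun m n hmn => smul_le_smul_of_nonneg_right (by gcongr) hg,
    Set.forall_mem_range.2 hnonneg, fun b hb => ?_⟩
  set s := ⨅ n : ℕ, ((n : ℝ) + 1)⁻¹ • g
  have hbdd : BddBelow (Set.range fun n : ℕ => ((n : ℝ) + 1)⁻¹ • g) :=
    ⟨0, Set.forall_mem_range.2 hnonneg⟩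
  -- `2 • s` is again a lower bound, since `2 / (2n + 2) = 1 / (n + 1)`
  have hs : (2 : ℝ) • s ≤ s := le_ciInf fun n => by
    have := smul_le_smul_of_nonneg_left (ciInf_le hbdd (2 * n + 1)) (zero_le_two : (0 : ℝ) ≤ 2)
    convert this using 1
    rw [smul_smul]
    congr 1
    push_cast
    field_simp
    ring
  have hs0 : s ≤ 0 := by
    rw [two_smul] at hs
    simpa using hs
  exact (le_ciInf fun n => hb ⟨n, rfl⟩).trans hs0

end DedekindComplete

section BandProjection

variable {E : Type*} [Lattice E] [AddCommGroup E] [IsOrderedAddMonoid E] [Module ℝ E]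
  {P : Module.End ℝ E}

theorem IsBandProjection.monotone (hP : IsBandProjection P) : Monotone P := fun a b hab => by
  have := (hP.2 (b - a) (sub_nonneg.2 hab)).1
  rwa [map_sub, sub_nonneg] at this

theorem IsBandProjection.le_smul_apply_add_sub_inf_add (hP : IsBandProjection P) {f g : E}
    (hfg : f ≤ g) (e : E) (t : ℝ) : f ≤ t • P e + (g - g ⊓ t • e) + (1 - P) f :=
  calc f = P f + (1 - P) f := by simp
    _ ≤ P (g ⊓ t • e) + P (g - g ⊓ t • e) + (1 - P) f := by
      rw [← map_add, add_sub_cancel]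
      gcongr
      exact hP.monotone hfg
    _ ≤ t • P e + (g - g ⊓ t • e) + (1 - P) f := by
      gcongr
      · exact (hP.monotone inf_le_right).trans_eq (map_smul P t e)
      · exact (hP.2 _ (sub_nonneg.2 inf_le_left)).2

end BandProjection

section CesaroMean

variable {E : Type*} [AddCommGroup E]

theorem sum_range_le_nsmul_add_nsmul [PartialOrder E] [IsOrderedAddMonoid E] {r : ℕ → E}
    {g b : E} {m : ℕ} (hg : 0 ≤ g) (hb : 0 ≤ b) (hrg : ∀ k, r k ≤ g)
    (hrb : ∀ k, m ≤ k → r k ≤ b) (n : ℕ) : ∑ k ∈ range n, r k ≤ m • g + n • b :=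
  calc ∑ k ∈ range n, r k ≤ ∑ k ∈ range n, ((if k < m then g else 0) + b) :=
        sum_le_sum fun k _ => by
          split_ifs with hk
          · exact (hrg k).trans (le_add_of_nonneg_right hb)
          · simpa using hrb k (not_lt.1 hk)
    _ = #{k ∈ range n | k < m} • g + n • b := by
        rw [sum_add_distrib, sum_ite, sum_const_zero, add_zero, sum_const, sum_const, card_range]
    _ ≤ m • g + n • b := by
        gcongr
        exact (card_le_card fun k hk => mem_range.2 (mem_filter.1 hk).2).trans (card_range m).le

variable [Module ℝ E]

noncomputable def cesaroMean (x : ℕ → E) (n : ℕ) : E :=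
  (n : ℝ)⁻¹ • ∑ k ∈ range n, x k

theorem cesaroMean_add (x y : ℕ → E) (n : ℕ) :
    cesaroMean (fun k => x k + y k) n = cesaroMean x n + cesaroMean y n := by
  simp only [cesaroMean, sum_add_distrib, smul_add]

theorem cesaroMean_const_smul (t : ℝ) (x : ℕ → E) (n : ℕ) :
    cesaroMean (fun k => t • x k) n = t • cesaroMean x n := by
  simp only [cesaroMean, ← smul_sum, smul_comm t]

variable [PartialOrder E]

theorem cesaroMean_const_le {c : E} (hc : 0 ≤ c) (n : ℕ) : cesaroMean (fun _ => c) n ≤ c := by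
  rcases n.eq_zero_or_pos with rfl | hn
  · simpa [cesaroMean] using hc
  · rw [cesaroMean, sum_const, card_range, ← Nat.cast_smul_eq_nsmul ℝ, smul_smul,
      inv_mul_cancel₀ (by positivity), one_smul]

variable [IsOrderedAddMonoid E] [PosSMulMono ℝ E]

theorem cesaroMean_mono {x y : ℕ → E} (h : ∀ k, x k ≤ y k) (n : ℕ) :
    cesaroMean x n ≤ cesaroMean y n :=
  smul_le_smul_of_nonneg_left (sum_le_sum fun k _ => h k) (by positivity)

theorem cesaroMean_nonneg {x : ℕ → E} (h : ∀ k, 0 ≤ x k) (n : ℕ) : 0 ≤ cesaroMean x n :=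
  smul_nonneg (by positivity) (sum_nonneg fun k _ => h k)

end CesaroMean

theorem cesaroMean_le_smul_add_sub_inf_add {E : Type*} [Lattice E] [AddCommGroup E]
    [IsOrderedAddMonoid E] [Module ℝ E] [PosSMulMono ℝ E] {P : ℕ → Module.End ℝ E}
    (hP : ∀ k, IsBandProjection (P k)) {f : ℕ → E} {g : E} (hfg : ∀ k, f k ≤ g) (e : E) (t : ℝ)
    (n : ℕ) : cesaroMean f n ≤ t • cesaroMean (fun k => P k e) n + (g - g ⊓ t • e) +
      cesaroMean (fun k => (1 - P k) (f k)) n :=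
  calc cesaroMean f n
      ≤ cesaroMean (fun k => t • P k e + (g - g ⊓ t • e) + (1 - P k) (f k)) n :=
        cesaroMean_mono (fun k => (hP k).le_smul_apply_add_sub_inf_add (hfg k) e t) n
    _ ≤ _ := by
        rw [cesaroMean_add, cesaroMean_add, cesaroMean_const_smul]
        gcongr
        exact cesaroMean_const_le (sub_nonneg.2 inf_le_left) n

theorem OrderConvergesTo.cesaroMean_of_le {E : Type*} [ConditionallyCompleteLattice E]
    [AddCommGroup E] [IsOrderedAddMonoid E] [Module ℝ E] [PosSMulMono ℝ E] {r : ℕ → E} {g : E}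
    (h : OrderConvergesTo r 0) (hr : ∀ n, 0 ≤ r n) (hrg : ∀ n, r n ≤ g) :
    OrderConvergesTo (cesaroMean r) 0 := by
  obtain ⟨y, hy, hry⟩ := orderConvergesTo_zero_iff.1 h
  have hg : 0 ≤ g := (hr 0).trans (hrg 0)
  -- the first `m` terms are at most `g`, the others at most `y m`
  refine orderConvergesTo_zero_of_abs_le_add (c := y)
    (u := fun m n : ℕ => (2 * m : ℝ) • ((n : ℝ) + 1)⁻¹ • g)
    (fun m => (decreasesToZero_inv_succ_smul hg).const_smul (by positivity)) hy.2 fun m n => ?_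
  rw [abs_of_nonneg (cesaroMean_nonneg hr n)]
  rcases n.eq_zero_or_pos with rfl | hn
  · simpa [cesaroMean] using add_nonneg (smul_nonneg (by positivity) hg) (hy.nonneg m)
  have hsum := sum_range_le_nsmul_add_nsmul hg (hy.nonneg m) hrg
    (fun k hk => (le_abs_self _).trans ((hry k).trans (hy.1 hk))) n
  calc cesaroMean r n ≤ (n : ℝ)⁻¹ • ((m : ℝ) • g + (n : ℝ) • y m) := by
        rw [Nat.cast_smul_eq_nsmul, Nat.cast_smul_eq_nsmul]
        exact smul_le_smul_of_nonneg_left hsum (by positivity)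
    _ = ((n : ℝ)⁻¹ * m) • g + y m := by
        rw [smul_add, smul_smul, smul_smul, inv_mul_cancel₀ (by positivity), one_smul]
    _ ≤ (2 * m : ℝ) • ((n : ℝ) + 1)⁻¹ • g + y m := by
        rw [smul_smul]
        refine add_le_add_left (smul_le_smul_of_nonneg_right ?_ hg) _
        have : (1 : ℝ) ≤ n := Nat.one_le_cast.2 hn
        field_simp
        nlinarith [(m.cast_nonneg : (0 : ℝ) ≤ m)]

/-- Sufficiency part of the Koopman-von Neumann theorem in Riesz spaces. -/
theorem stmt3 {E : Type*} [ConditionallyCompleteLattice E] [AddCommGroup E]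
    [CovariantClass E E (· + ·) (· ≤ ·)] [Module ℝ E] [PosSMulMono ℝ E]
    (e : E) (he : IsWeakOrderUnit e) (f : ℕ → E) (g : E)
    (hf : ∀ n, 0 ≤ f n) (hbd : ∀ n, f n ≤ g)
    (P : ℕ → Module.End ℝ E) (hP : ∀ n, IsBandProjection (P n))
    (hdens : OrderConvergesTo (fun n => (n : ℝ)⁻¹ • ∑ k ∈ Finset.range n, P k e) 0)
    (hconv : OrderConvergesTo (fun n => (1 - P n) (f n)) 0) :
    OrderConvergesTo (fun n => (n : ℝ)⁻¹ • ∑ k ∈ Finset.range n, f k) 0 := by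
  have : IsOrderedAddMonoid E := { add_le_add_left := fun _ _ h c => add_le_add_left h c }
  obtain ⟨z, hz, hPz⟩ := orderConvergesTo_zero_iff.1 hdens
  obtain ⟨w, hw, hrw⟩ := orderConvergesTo_zero_iff.1 <| hconv.cesaroMean_of_le
    (fun n => sub_nonneg.2 ((hP n).2 (f n) (hf n)).2)
    (fun n => (sub_le_self _ ((hP n).2 (f n) (hf n)).1).trans (hbd n))
  have hc : IsGLB (Set.range fun j : ℕ => g - g ⊓ (j : ℝ) • e) 0 := by
    have := (isGLB_singleton (a := g)).sub (he.isLUB_inf_natCast_smul g)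
    rwa [Set.singleton_sub, ← Set.range_comp, sub_self] at this
  refine orderConvergesTo_zero_of_abs_le_add (x := cesaroMean f)
    (u := fun j : ℕ => (j : ℝ) • z + w) (fun j => (hz.const_smul j.cast_nonneg).add hw) hc
    fun j n => ?_
  rw [abs_of_nonneg (cesaroMean_nonneg hf n), Pi.add_apply, Pi.smul_apply, add_right_comm]
  refine (cesaroMean_le_smul_add_sub_inf_add hP hbd e j n).trans ?_
  gcongr
  · exact (le_abs_self _).trans (hPz n)
  · exact (le_abs_self _).trans (hrw n)
end

section
/- For 1 < p < 2, define g^p_j = n if j = ⌊n^p⌋ for some n ∈ ℕ, and g^p_j = 0 otherwise. Then the set N = {⌊n^p⌋ : n ∈ ℕ} has density zero and g^p_j = 0 for j ∉ N, but the Cesàro means (1/n) ∑_{k=0}^{n-1} g^p_k diverge to ∞ as n → ∞. -/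
open Filter Finset

/-- A set `N ⊆ ℕ` has density zero. -/
def HasDensityZero (N : Set ℕ) : Prop :=
  Tendsto (fun n => (∑ k ∈ Finset.range n, Set.indicator N (fun _ => (1 : ℝ)) k) / n)
    atTop (nhds 0)

/-- The sequence `g^p`: `g^p j = n` when `j = ⌊n^p⌋`, and `0` otherwise. -/
noncomputable def gp (p : ℝ) (j : ℕ) : ℕ := sSup {n : ℕ | ⌊(n : ℝ) ^ p⌋ = (j : ℤ)}

/-!
For `p ≥ 1` the map `m ↦ ⌊m ^ p⌋` is strictly increasing, because `(m + 1) ^ p ≥ m ^ p + 1`,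
and `⌊m ^ p⌋ < n ↔ m < n ^ (1 / p)`. So `N ∩ [0, n)` is the image of `[0, ⌈n ^ (1 / p)⌉)`:
it has at most `n ^ (1 / p) + 1 = o(n)` elements. Since `g^p` vanishes off `N` and takes the
value `m` at `⌊m ^ p⌋`, `∑_{k < n} g^p_k = ∑_{m < ⌈n ^ (1 / p)⌉} m ≥ n ^ (2 / p) / 4`, and
`n ^ (2 / p) / n → ∞` because `p < 2`.
-/

lemma sq_div_four_le_sum_range_ceil {x : ℝ} (hx : 2 ≤ x) :
    x ^ 2 / 4 ≤ ∑ m ∈ range ⌈x⌉₊, (m : ℝ) := by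
  have hxc : x ≤ ⌈x⌉₊ := Nat.le_ceil x
  have hc : 1 ≤ ⌈x⌉₊ := by exact_mod_cast (by linarith : (1 : ℝ) ≤ ⌈x⌉₊)
  have hsum := congrArg (Nat.cast : ℕ → ℝ) (sum_range_id_mul_two ⌈x⌉₊)
  push_cast [Nat.cast_sub hc] at hsum
  nlinarith

lemma tendsto_rpow_add_one_div_atTop {q : ℝ} (hq : q < 1) :
    Tendsto (fun x : ℝ => (x ^ q + 1) / x) atTop (nhds 0) := by
  have h := (tendsto_rpow_neg_atTop (by linarith : 0 < 1 - q)).add tendsto_inv_atTop_zero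
  rw [add_zero] at h
  refine h.congr' ?_
  filter_upwards [eventually_gt_atTop 0] with x hx
  rw [add_div, neg_sub, Real.rpow_sub hx, Real.rpow_one, one_div]

def powerFloors (p : ℝ) : Set ℕ := Set.range fun m : ℕ => ⌊(m : ℝ) ^ p⌋₊

section

variable {p : ℝ}

lemma strictMono_floor_rpow (hp : 1 ≤ p) : StrictMono fun m : ℕ => ⌊(m : ℝ) ^ p⌋₊ := by
  refine strictMono_nat_of_lt_succ fun m => Nat.lt_of_succ_le (Nat.le_floor ?_)
  have superadd := Real.add_rpow_le_rpow_add (Nat.cast_nonneg m) zero_le_one hp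
  rw [Real.one_rpow] at superadd
  push_cast
  linarith [Nat.floor_le (by positivity : (0 : ℝ) ≤ (m : ℝ) ^ p)]

lemma natCast_eq_floor_rpow_iff (j m : ℕ) : (j : ℤ) = ⌊(m : ℝ) ^ p⌋ ↔ j = ⌊(m : ℝ) ^ p⌋₊ := by
  rw [← Int.natCast_floor_eq_floor (by positivity), Nat.cast_inj]

lemma setOf_natCast_eq_floor_rpow (p : ℝ) :
    {j : ℕ | ∃ n : ℕ, (j : ℤ) = ⌊(n : ℝ) ^ p⌋} = powerFloors p := by
  ext j
  simp [powerFloors, natCast_eq_floor_rpow_iff, eq_comm]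

lemma floor_rpow_lt_iff (hp : 0 < p) (m n : ℕ) :
    ⌊(m : ℝ) ^ p⌋₊ < n ↔ m < ⌈(n : ℝ) ^ p⁻¹⌉₊ := by
  rw [Nat.floor_lt (by positivity), Nat.lt_ceil,
    Real.lt_rpow_inv_iff_of_pos (by positivity) (by positivity) hp]

lemma filter_range_mem_powerFloors (hp : 0 < p) (n : ℕ) [DecidablePred (· ∈ powerFloors p)] :
    {j ∈ range n | j ∈ powerFloors p} =
      (range ⌈(n : ℝ) ^ p⁻¹⌉₊).image fun m : ℕ => ⌊(m : ℝ) ^ p⌋₊ := by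
  ext j
  rw [mem_filter, mem_image, powerFloors, Set.mem_range]
  simp_rw [mem_range]
  constructor
  · rintro ⟨hj, m, rfl⟩
    exact ⟨m, (floor_rpow_lt_iff hp m n).1 hj, rfl⟩
  · rintro ⟨m, hm, rfl⟩
    exact ⟨(floor_rpow_lt_iff hp m n).2 hm, m, rfl⟩

lemma card_filter_range_mem_powerFloors_le (hp : 0 < p) (n : ℕ)
    [DecidablePred (· ∈ powerFloors p)] :
    (#{j ∈ range n | j ∈ powerFloors p} : ℝ) ≤ (n : ℝ) ^ p⁻¹ + 1 := by
  rw [filter_range_mem_powerFloors hp]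
  calc (#((range ⌈(n : ℝ) ^ p⁻¹⌉₊).image fun m : ℕ => ⌊(m : ℝ) ^ p⌋₊) : ℝ)
      ≤ ⌈(n : ℝ) ^ p⁻¹⌉₊ := by exact_mod_cast card_image_le.trans (card_range _).le
    _ ≤ (n : ℝ) ^ p⁻¹ + 1 := (Nat.ceil_lt_add_one (by positivity)).le

lemma gp_floor_rpow (hp : 1 ≤ p) (m : ℕ) : gp p ⌊(m : ℝ) ^ p⌋₊ = m := by
  have h : {n : ℕ | ⌊(n : ℝ) ^ p⌋ = (⌊(m : ℝ) ^ p⌋₊ : ℤ)} = {m} := by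
    ext n
    rw [Set.mem_ofPred_eq, eq_comm, natCast_eq_floor_rpow_iff, Set.mem_singleton_iff]
    exact ⟨fun h => (strictMono_floor_rpow hp).injective h.symm, fun h => h ▸ rfl⟩
  rw [gp, h, csSup_singleton]

lemma gp_eq_zero_of_notMem {j : ℕ} (hj : j ∉ powerFloors p) : gp p j = 0 := by
  have h : {n : ℕ | ⌊(n : ℝ) ^ p⌋ = (j : ℤ)} = ∅ := by
    refine Set.eq_empty_of_forall_notMem fun n hn => hj ⟨n, ?_⟩
    rw [Set.mem_ofPred_eq, eq_comm, natCast_eq_floor_rpow_iff] at hn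
    exact hn.symm
  rw [gp, h, csSup_empty, bot_eq_zero]

lemma sum_range_gp (hp : 1 ≤ p) (n : ℕ) :
    ∑ k ∈ range n, (gp p k : ℝ) = ∑ m ∈ range ⌈(n : ℝ) ^ p⁻¹⌉₊, (m : ℝ) := by
  classical
  have hnz : ∀ k ∈ range n, (gp p k : ℝ) ≠ 0 → k ∈ powerFloors p := fun k _ hk => by
    by_contra h
    exact hk (by rw [gp_eq_zero_of_notMem h, Nat.cast_zero])
  have hinj : Set.InjOn (fun m : ℕ => ⌊(m : ℝ) ^ p⌋₊) (range ⌈(n : ℝ) ^ p⁻¹⌉₊) :=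
    (strictMono_floor_rpow hp).injective.injOn
  rw [← sum_filter_of_ne hnz, filter_range_mem_powerFloors (by linarith), sum_image hinj]
  simp only [gp_floor_rpow hp]

end

lemma hasDensityZero_powerFloors {p : ℝ} (hp : 1 < p) : HasDensityZero (powerFloors p) := by
  classical
  have hlim := (tendsto_rpow_add_one_div_atTop (inv_lt_one_of_one_lt₀ hp)).comp
    tendsto_natCast_atTop_atTop
  have hcount (n : ℕ) : ∑ k ∈ range n, (powerFloors p).indicator (fun _ => (1 : ℝ)) k =
      #{j ∈ range n | j ∈ powerFloors p} := by
    simp only [Set.indicator_apply, sum_boole]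
  refine squeeze_zero (fun n => by rw [hcount]; positivity) (fun n => ?_) hlim
  rw [hcount, Function.comp_apply]
  gcongr
  exact card_filter_range_mem_powerFloors_le (by linarith) n

lemma tendsto_cesaro_gp_atTop {p : ℝ} (hp1 : 1 < p) (hp2 : p < 2) :
    Tendsto (fun n : ℕ => (∑ k ∈ range n, (gp p k : ℝ)) / n) atTop atTop := by
  have hp : 0 < p := by linarith
  have hq : 0 < 2 * p⁻¹ - 1 := by
    rw [sub_pos, ← div_eq_mul_inv, one_lt_div hp]; exact hp2
  have hroot : Tendsto (fun n : ℕ => (n : ℝ) ^ p⁻¹) atTop atTop :=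
    (tendsto_rpow_atTop (by positivity)).comp tendsto_natCast_atTop_atTop
  refine tendsto_atTop_mono' atTop ?_ (((tendsto_rpow_atTop hq).comp
    tendsto_natCast_atTop_atTop).atTop_div_const (by norm_num : (0 : ℝ) < 4))
  filter_upwards [hroot.eventually_ge_atTop 2, eventually_gt_atTop 0] with n hn2 hn0
  have hn : (0 : ℝ) < n := Nat.cast_pos.2 hn0
  calc (n : ℝ) ^ (2 * p⁻¹ - 1) / 4 = ((n : ℝ) ^ p⁻¹) ^ 2 / 4 / n := by
        rw [Real.rpow_sub hn, Real.rpow_one, ← Real.rpow_natCast, ← Real.rpow_mul hn.le]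
        ring_nf
    _ ≤ (∑ k ∈ range n, (gp p k : ℝ)) / n := by
        rw [sum_range_gp hp1.le]
        gcongr
        exact sq_div_four_le_sum_range_ceil hn2

/-- For `1 < p < 2`: `N = {⌊n^p⌋}` has density zero and `g^p` vanishes off `N`,
but the Cesàro means of `g^p` diverge to `∞`. -/
theorem stmt8 (p : ℝ) (hp1 : 1 < p) (hp2 : p < 2) :
    HasDensityZero {j : ℕ | ∃ n : ℕ, (j : ℤ) = ⌊(n : ℝ) ^ p⌋} ∧
    (∀ j : ℕ, j ∉ {j : ℕ | ∃ n : ℕ, (j : ℤ) = ⌊(n : ℝ) ^ p⌋} → gp p j = 0) ∧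
    Tendsto (fun n => (∑ k ∈ Finset.range n, (gp p k : ℝ)) / n) atTop atTop := by
  rw [setOf_natCast_eq_floor_rpow]
  exact ⟨hasDensityZero_powerFloors hp1, fun _ => gp_eq_zero_of_notMem,
    tendsto_cesaro_gp_atTop hp1 hp2⟩
end

section
/- Given a conditional expectation preserving system (E, T, S, e) that is weakly mixing (i.e., for all band projections P, Q on E, (1/n) ∑_{k=0}^{n-1} |T((S^k P)Qe) − TPe · TQe| → 0 in order), it follows that for all f, g ∈ E_e, (1/n) ∑_{k=0}^{n-1} |T((S^k f) · g) − Tf · Tg| → 0 in order as n → ∞. -/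
/-!
Freudenthal's spectral theorem approximates every `0 ≤ f ≤ e`, uniformly with respect to `e`,
by linear combinations of components `P e` of `e`. For a family of linear maps `L k` that
send `e`-bounded elements to uniformly `e`-bounded ones, the `f` for which the Cesàro means of
`|L k f|` order converge to `0` form a subspace closed under such approximation (a diagonal
argument, using that `E` is Archimedean). Applied to the bilinear defect
`T((S^k f) · g) - Tf · Tg`, first in `f` for fixed `g = Q e` and then in `g`, this extends the
mixing hypothesis from pairs of components of `e` to all of `E_e`.
-/

open Filter Finset

/-- A conditional expectation operator: a positive, order continuous projection whose
range is a Dedekind complete Riesz subspace, mapping weak order units to weak order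
units. -/
structure IsConditionalExpectation {E : Type*} [Lattice E] [AddCommGroup E] [Module ℝ E]
    (T : Module.End ℝ E) : Prop where
  positive : ∀ f : E, 0 ≤ f → 0 ≤ T f
  idem : T * T = T
  orderContinuous : ∀ A : Set E, A.Nonempty → DirectedOn (· ≤ ·) A →
    ∀ l : E, IsLUB A l → IsLUB (T '' A) (T l)
  rangeSublattice : ∀ f g : E, T (T f ⊔ T g) = T f ⊔ T g
  rangeDedekindComplete : ∀ A ⊆ Set.range T, A.Nonempty → BddAbove A →
    ∃ l ∈ Set.range T, IsLUB A l
  mapsWeakUnits : ∀ e : E, IsWeakOrderUnit e → IsWeakOrderUnit (T e)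

/-- An order continuous Riesz homomorphism. -/
structure IsOrderContRieszHom {E : Type*} [Lattice E] [AddCommGroup E] [Module ℝ E]
    (S : Module.End ℝ E) : Prop where
  latticeHom : ∀ f g : E, S (f ⊔ g) = S f ⊔ S g
  orderContinuous : ∀ A : Set E, A.Nonempty → DirectedOn (· ≤ ·) A →
    ∀ l : E, IsLUB A l → IsLUB (S '' A) (S l)

section LatticeOrderedGroup

variable {E : Type*} [Lattice E] [AddCommGroup E] [IsOrderedAddMonoid E]

theorem add_inf_le_inf_add_inf {a x y : E} (ha : 0 ≤ a) (hx : 0 ≤ x) (hy : 0 ≤ y) :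
    (x + y) ⊓ a ≤ x ⊓ a + y ⊓ a := by
  rw [inf_add, add_inf, add_inf]
  exact le_inf (le_inf inf_le_left (inf_le_right.trans (le_add_of_nonneg_left hx)))
    (le_inf (inf_le_right.trans (le_add_of_nonneg_right hy))
      (inf_le_right.trans (le_add_of_nonneg_left ha)))

theorem map_sub_posPart_negPart [Module ℝ E] (P : Module.End ℝ E) (x : E) :
    P x⁺ - P x⁻ = P x := by
  rw [← map_sub, posPart_sub_negPart]

theorem IsBandProjection.apply_le_posPart [Module ℝ E] {P : Module.End ℝ E}
    (hP : IsBandProjection P) (y : E) : P y ≤ y⁺ := by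
  rw [← map_sub_posPart_negPart]
  exact (sub_le_self _ (hP.2 _ (negPart_nonneg y)).1).trans (hP.2 _ (posPart_nonneg y)).2

end LatticeOrderedGroup

section RealScalars

variable {E : Type*} [Lattice E] [AddCommGroup E] [Module ℝ E] [PosSMulMono ℝ E]

theorem smul_sup_of_pos {c : ℝ} (hc : 0 < c) (x y : E) : c • (x ⊔ y) = c • x ⊔ c • y :=
  (OrderIso.smulRight hc).map_sup x y

theorem smul_inf_of_pos {c : ℝ} (hc : 0 < c) (x y : E) : c • (x ⊓ y) = c • x ⊓ c • y :=
  (OrderIso.smulRight hc).map_inf x y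

variable [IsOrderedAddMonoid E]

theorem abs_smul_of_nonneg {c : ℝ} (hc : 0 ≤ c) (x : E) : |c • x| = c • |x| := by
  rcases hc.eq_or_lt with rfl | hc
  · simp
  · rw [abs, abs, smul_sup_of_pos hc, smul_neg]

theorem abs_smul_eq_abs_smul_abs (c : ℝ) (x : E) : |c • x| = |c| • |x| := by
  rcases le_total 0 c with hc | hc
  · rw [abs_smul_of_nonneg hc, abs_of_nonneg hc]
  · rw [← abs_neg, ← neg_smul, abs_smul_of_nonneg (neg_nonneg.mpr hc), abs_of_nonpos hc]

end RealScalars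

section DedekindComplete

variable {E : Type*} [ConditionallyCompleteLattice E] [AddCommGroup E] [IsOrderedAddMonoid E]

theorem le_zero_of_forall_nsmul_le {d e : E} (h : ∀ n : ℕ, n • d ≤ e) : d ≤ 0 := by
  have hbdd : BddAbove (Set.range fun n : ℕ => n • d) := ⟨e, by rintro _ ⟨n, rfl⟩; exact h n⟩
  have hshift : ⨆ n : ℕ, n • d ≤ (⨆ n : ℕ, n • d) - d := ciSup_le fun n =>
    le_sub_iff_add_le.mpr (by rw [← succ_nsmul]; exact le_ciSup hbdd (n + 1))
  simpa using hshift

theorem le_zero_of_forall_le_inv_succ_smul [Module ℝ E] [PosSMulMono ℝ E] {d e : E}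
    (h : ∀ j : ℕ, d ≤ ((j : ℝ) + 1)⁻¹ • e) : d ≤ 0 := by
  refine le_zero_of_forall_nsmul_le (e := e - d) fun j => le_sub_iff_add_le.mpr ?_
  have : ((j + 1 : ℕ) : ℝ) • d ≤ e := by
    exact_mod_cast (le_inv_smul_iff_of_pos (by positivity)).mp (h j)
  rwa [Nat.cast_smul_eq_nsmul, succ_nsmul] at this

end DedekindComplete

namespace OrderConvergesTo

section

variable {E : Type*} [Lattice E] [AddCommGroup E] [IsOrderedAddMonoid E]

theorem const_zero : OrderConvergesTo (fun _ : ℕ => (0 : E)) 0 :=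
  ⟨fun _ => 0, antitone_const, ⟨by rintro _ ⟨_, rfl⟩; rfl, fun _ hb => hb ⟨0, rfl⟩⟩,
    fun _ => by simp⟩

theorem of_le {x z : ℕ → E} (hz : OrderConvergesTo z 0) (hx : ∀ n, 0 ≤ x n)
    (hxz : ∀ n, x n ≤ z n) : OrderConvergesTo x 0 := by
  obtain ⟨y, hy_anti, hy_glb, hzy⟩ := hz
  refine ⟨y, hy_anti, hy_glb, fun n => ?_⟩
  rw [sub_zero, abs_of_nonneg (hx n)]
  exact (hxz n).trans ((le_abs_self _).trans (by simpa using hzy n))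

theorem add {x z : ℕ → E} (hx : OrderConvergesTo x 0) (hz : OrderConvergesTo z 0) :
    OrderConvergesTo (x + z) 0 := by
  obtain ⟨y₁, hy₁_anti, hy₁_glb, hxy⟩ := hx
  obtain ⟨y₂, hy₂_anti, hy₂_glb, hzy⟩ := hz
  refine ⟨y₁ + y₂, hy₁_anti.add hy₂_anti, ⟨?_, fun b hb => ?_⟩, fun n => ?_⟩
  · rintro _ ⟨n, rfl⟩
    exact add_nonneg (hy₁_glb.1 ⟨n, rfl⟩) (hy₂_glb.1 ⟨n, rfl⟩)
  · -- `b - y₁ p` is a lower bound of `y₂` because `y₁ + y₂` is antitone.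
    refine hy₁_glb.2 ?_
    rintro _ ⟨p, rfl⟩
    refine sub_nonpos.mp (hy₂_glb.2 ?_)
    rintro _ ⟨q, rfl⟩
    refine sub_le_iff_le_add.mpr ((hb ⟨max p q, rfl⟩).trans ?_)
    rw [add_comm (y₂ q)]
    exact add_le_add (hy₁_anti (le_max_left p q)) (hy₂_anti (le_max_right p q))
  · simp only [Pi.add_apply, sub_zero] at hxy hzy ⊢
    exact (abs_add_le _ _).trans (add_le_add (hxy n) (hzy n))

theorem const_smul [Module ℝ E] [PosSMulMono ℝ E] {x : ℕ → E} (hx : OrderConvergesTo x 0)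
    {c : ℝ} (hc : 0 ≤ c) : OrderConvergesTo (c • x) 0 := by
  rcases hc.eq_or_lt with rfl | hc
  · rw [zero_smul]
    exact const_zero
  obtain ⟨y, hy_anti, hy_glb, hxy⟩ := hx
  refine ⟨c • y, fun m n hmn => smul_le_smul_of_nonneg_left (hy_anti hmn) hc.le,
    ⟨?_, fun b hb => ?_⟩, fun n => ?_⟩
  · rintro _ ⟨n, rfl⟩
    exact smul_nonneg hc.le (hy_glb.1 ⟨n, rfl⟩)
  · have : c⁻¹ • b ≤ 0 := hy_glb.2 fun _ ⟨n, hn⟩ =>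
      hn ▸ (inv_smul_le_iff_of_pos hc).mpr (hb ⟨n, rfl⟩)
    simpa using (inv_smul_le_iff_of_pos hc).mp this
  · simp only [Pi.smul_apply, sub_zero] at hxy ⊢
    rw [abs_smul_of_nonneg hc.le]
    exact smul_le_smul_of_nonneg_left (hxy n) hc.le

end

theorem of_forall_le_add_inv_succ_smul {E : Type*} [ConditionallyCompleteLattice E]
    [AddCommGroup E] [IsOrderedAddMonoid E] [Module ℝ E] [PosSMulMono ℝ E] {x : ℕ → E} {e : E}
    (he : 0 ≤ e) (hx : ∀ n, 0 ≤ x n)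
    (h : ∀ j : ℕ, ∃ z, OrderConvergesTo z 0 ∧ ∀ n, x n ≤ z n + ((j : ℝ) + 1)⁻¹ • e) :
    OrderConvergesTo x 0 := by
  choose z hz hxz using h
  choose y hy_anti hy_glb hzy using hz
  simp only [sub_zero] at hzy
  set ε : ℕ → E := fun j => ((j : ℝ) + 1)⁻¹ • e
  -- Diagonal majorant: the best of the first `n + 1` bounds.
  set Y : ℕ → E := fun n => (range (n + 1)).inf' nonempty_range_add_one fun j => y j n + ε j
  have hY_le : ∀ {n j}, j ≤ n → Y n ≤ y j n + ε j := fun hjn =>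
    inf'_le _ (mem_range.mpr (Nat.lt_succ_of_le hjn))
  refine ⟨Y, fun m n hmn => ?_, ⟨?_, fun d hd => ?_⟩, fun n => ?_⟩
  · exact le_inf' _ _ fun j hj =>
      (hY_le ((Nat.le_of_lt_succ (mem_range.mp hj)).trans hmn)).trans
        (add_le_add_left (hy_anti j hmn) _)
  · rintro _ ⟨n, rfl⟩
    exact le_inf' _ _ fun j _ => add_nonneg ((hy_glb j).1 ⟨n, rfl⟩) (smul_nonneg (by positivity) he)
  · refine le_zero_of_forall_le_inv_succ_smul (e := e) fun j => sub_nonpos.mp ((hy_glb j).2 ?_)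
    rintro _ ⟨m, rfl⟩
    refine sub_le_iff_le_add.mpr ((hd ⟨max j m, rfl⟩).trans ((hY_le (le_max_left j m)).trans ?_))
    exact add_le_add_left (hy_anti j (le_max_right j m)) _
  · rw [sub_zero, abs_of_nonneg (hx n)]
    exact le_inf' _ _ fun j _ =>
      (hxz j n).trans (add_le_add_left ((le_abs_self _).trans (hzy j n)) _)

end OrderConvergesTo

section PositiveCone

variable {E F : Type*} [Lattice E] [AddCommGroup E] [AddCommGroup F] {φ : E → F}

theorem sub_eq_sub_of_map_add (hφ : ∀ x y, 0 ≤ x → 0 ≤ y → φ (x + y) = φ x + φ y)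
    {a b a' b' : E} (ha : 0 ≤ a) (hb : 0 ≤ b) (ha' : 0 ≤ a') (hb' : 0 ≤ b')
    (h : a - b = a' - b') : φ a - φ b = φ a' - φ b' := by
  rw [sub_eq_sub_iff_add_eq_add] at h ⊢
  rw [← hφ _ _ ha hb', ← hφ _ _ ha' hb, h]

variable [IsOrderedAddMonoid E] [Module ℝ E] [PosSMulMono ℝ E] [Module ℝ F]

noncomputable def linearExtensionOfNonneg (φ : E → F)
    (hadd : ∀ x y, 0 ≤ x → 0 ≤ y → φ (x + y) = φ x + φ y)
    (hsmul : ∀ (c : ℝ) x, 0 ≤ c → 0 ≤ x → φ (c • x) = c • φ x) : E →ₗ[ℝ] F where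
  toFun x := φ x⁺ - φ x⁻
  map_add' x y := by
    rw [sub_eq_sub_of_map_add hadd (posPart_nonneg _) (negPart_nonneg _)
      (add_nonneg (posPart_nonneg x) (posPart_nonneg y))
      (add_nonneg (negPart_nonneg x) (negPart_nonneg y))
      (by rw [posPart_sub_negPart, add_sub_add_comm, posPart_sub_negPart, posPart_sub_negPart]),
      hadd _ _ (posPart_nonneg x) (posPart_nonneg y),
      hadd _ _ (negPart_nonneg x) (negPart_nonneg y)]
    abel
  map_smul' c x := by
    rcases le_total 0 c with hc | hc
    · rw [sub_eq_sub_of_map_add hadd (posPart_nonneg _) (negPart_nonneg _)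
        (smul_nonneg hc (posPart_nonneg x)) (smul_nonneg hc (negPart_nonneg x))
        (by rw [posPart_sub_negPart, ← smul_sub, posPart_sub_negPart]),
        hsmul _ _ hc (posPart_nonneg x), hsmul _ _ hc (negPart_nonneg x), RingHom.id_apply,
        smul_sub]
    · have hc' : 0 ≤ -c := neg_nonneg.mpr hc
      rw [sub_eq_sub_of_map_add hadd (posPart_nonneg _) (negPart_nonneg _)
        (smul_nonneg hc' (negPart_nonneg x)) (smul_nonneg hc' (posPart_nonneg x))
        (by rw [posPart_sub_negPart, ← smul_sub, neg_smul, ← smul_neg, neg_sub,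
          posPart_sub_negPart]),
        hsmul _ _ hc' (negPart_nonneg x), hsmul _ _ hc' (posPart_nonneg x), RingHom.id_apply,
        neg_smul, neg_smul, smul_sub]
      abel

theorem linearExtensionOfNonneg_apply_of_nonneg {hadd hsmul} {x : E} (hx : 0 ≤ x) :
    linearExtensionOfNonneg φ hadd hsmul x = φ x := by
  have hφ0 : φ 0 = 0 := by simpa using hadd 0 0 le_rfl le_rfl
  simp [linearExtensionOfNonneg, posPart_eq_self.mpr hx, negPart_eq_zero.mpr hx, hφ0]

end PositiveCone

section BandProjection

open scoped NNReal

variable {E : Type*} [ConditionallyCompleteLattice E] [AddCommGroup E] [Module ℝ E]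

/-- For `f ≥ 0`, the component of `f` in the band generated by `u ≥ 0`. -/
noncomputable def bandProjNonneg (u f : E) : E := ⨆ t : ℝ≥0, f ⊓ (t : ℝ) • u

theorem bddAbove_range_inf_smul (u f : E) :
    BddAbove (Set.range fun t : ℝ≥0 => f ⊓ (t : ℝ) • u) :=
  ⟨f, by rintro _ ⟨t, rfl⟩; exact inf_le_left⟩

theorem inf_smul_le_bandProjNonneg (u f : E) (t : ℝ≥0) :
    f ⊓ (t : ℝ) • u ≤ bandProjNonneg u f :=
  le_ciSup (bddAbove_range_inf_smul u f) t

theorem bandProjNonneg_le_self (u f : E) : bandProjNonneg u f ≤ f :=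
  ciSup_le fun _ => inf_le_left

theorem bandProjNonneg_nonneg (u : E) {f : E} (hf : 0 ≤ f) : 0 ≤ bandProjNonneg u f := by
  simpa [inf_eq_right.mpr hf] using inf_smul_le_bandProjNonneg u f 0

theorem bandProjNonneg_zero (u : E) : bandProjNonneg u 0 = 0 :=
  (bandProjNonneg_le_self u 0).antisymm (bandProjNonneg_nonneg u le_rfl)

theorem bandProjNonneg_self (u : E) : bandProjNonneg u u = u :=
  (bandProjNonneg_le_self u u).antisymm (by simpa using inf_smul_le_bandProjNonneg u u 1)

theorem bandProjNonneg_idem (u f : E) :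
    bandProjNonneg u (bandProjNonneg u f) = bandProjNonneg u f :=
  (bandProjNonneg_le_self u _).antisymm <| ciSup_le fun t =>
    (le_inf (inf_smul_le_bandProjNonneg u f t) inf_le_right).trans
      (inf_smul_le_bandProjNonneg u _ t)

variable [PosSMulMono ℝ E]

theorem bandProjNonneg_smul (u : E) {c : ℝ} (hc : 0 ≤ c) (f : E) :
    bandProjNonneg u (c • f) = c • bandProjNonneg u f := by
  rcases hc.eq_or_lt with rfl | hc
  · simp [bandProjNonneg_zero]
  let c' : ℝ≥0 := ⟨c, hc.le⟩
  have hc' : c' ≠ 0 := by rw [ne_eq, ← NNReal.coe_eq_zero]; exact hc.ne'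
  calc bandProjNonneg u (c • f) = ⨆ t : ℝ≥0, (c • f) ⊓ ((c' * t : ℝ≥0) : ℝ) • u :=
        ((mul_left_surjective₀ hc').iSup_comp fun t : ℝ≥0 => (c • f) ⊓ (t : ℝ) • u).symm
    _ = ⨆ t : ℝ≥0, c • (f ⊓ (t : ℝ) • u) := by
        simp only [smul_inf_of_pos hc, smul_smul, NNReal.coe_mul]
        rfl
    _ = c • bandProjNonneg u f :=
        ((OrderIso.smulRight hc).map_ciSup (bddAbove_range_inf_smul u f)).symm

variable [IsOrderedAddMonoid E]

theorem bandProjNonneg_eq_zero_of_inf_eq_zero {u w : E} (hu : 0 ≤ u) (hw : 0 ≤ w)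
    (h : w ⊓ u = 0) : bandProjNonneg u w = 0 := by
  refine le_antisymm (ciSup_le fun t => ?_) (bandProjNonneg_nonneg u hw)
  have ht : (0 : ℝ) < t + 1 := by positivity
  calc w ⊓ (t : ℝ) • u ≤ ((t : ℝ) + 1) • w ⊓ ((t : ℝ) + 1) • u :=
        inf_le_inf (le_smul_of_one_le_left hw (by simp))
          (smul_le_smul_of_nonneg_right (by simp) hu)
    _ = 0 := by rw [← smul_inf_of_pos ht, h, smul_zero]

theorem bandProjNonneg_add {u : E} (hu : 0 ≤ u) {x y : E} (hx : 0 ≤ x) (hy : 0 ≤ y) :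
    bandProjNonneg u (x + y) = bandProjNonneg u x + bandProjNonneg u y := by
  refine le_antisymm (ciSup_le fun t => ?_) ?_
  · exact (add_inf_le_inf_add_inf (smul_nonneg t.2 hu) hx hy).trans
      (add_le_add (inf_smul_le_bandProjNonneg u x t) (inf_smul_le_bandProjNonneg u y t))
  · have key : ∀ s t : ℝ≥0, x ⊓ (s : ℝ) • u + y ⊓ (t : ℝ) • u ≤ bandProjNonneg u (x + y) :=
      fun s t => (le_inf (add_le_add inf_le_left inf_le_left) (by
        rw [NNReal.coe_add, add_smul]
        exact add_le_add inf_le_right inf_le_right)).trans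
          (inf_smul_le_bandProjNonneg u _ (s + t))
    refine le_sub_iff_add_le.mp (ciSup_le fun s => le_sub_iff_add_le.mpr ?_)
    rw [add_comm]
    exact le_sub_iff_add_le.mp (ciSup_le fun t => le_sub_iff_add_le.mpr (by
      rw [add_comm]; exact key s t))

noncomputable def bandProj (u : E) : Module.End ℝ E :=
  linearExtensionOfNonneg (bandProjNonneg |u|) (fun _ _ => bandProjNonneg_add (abs_nonneg u))
    (fun _ _ hc _ => bandProjNonneg_smul _ hc _)

theorem bandProj_apply_of_nonneg (u : E) {f : E} (hf : 0 ≤ f) :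
    bandProj u f = bandProjNonneg |u| f :=
  linearExtensionOfNonneg_apply_of_nonneg hf

theorem isBandProjection_bandProj (u : E) : IsBandProjection (bandProj u) := by
  refine ⟨LinearMap.ext fun f => ?_, fun f hf => ?_⟩
  · have hP : ∀ {g : E}, 0 ≤ g → bandProj u (bandProj u g) = bandProj u g := fun hg => by
      rw [bandProj_apply_of_nonneg u hg,
        bandProj_apply_of_nonneg u (bandProjNonneg_nonneg _ hg), bandProjNonneg_idem]
    rw [Module.End.mul_apply, ← posPart_sub_negPart f, map_sub, map_sub, hP (posPart_nonneg f),
      hP (negPart_nonneg f)]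
  · rw [bandProj_apply_of_nonneg u hf]
    exact ⟨bandProjNonneg_nonneg _ hf, bandProjNonneg_le_self _ _⟩

theorem bandProj_apply_eq_zero_of_inf_eq_zero {u w : E} (hw : 0 ≤ w) (h : w ⊓ |u| = 0) :
    bandProj u w = 0 := by
  rw [bandProj_apply_of_nonneg u hw, bandProjNonneg_eq_zero_of_inf_eq_zero (abs_nonneg u) hw h]

theorem bandProj_posPart_apply_self (x : E) : bandProj x⁺ x = x⁺ := by
  rw [← map_sub_posPart_negPart, bandProj_apply_eq_zero_of_inf_eq_zero (negPart_nonneg x)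
      (by rw [abs_of_nonneg (posPart_nonneg x), inf_comm, posPart_inf_negPart_eq_zero]),
    bandProj_apply_of_nonneg _ (posPart_nonneg x), abs_of_nonneg (posPart_nonneg x),
    bandProjNonneg_self, sub_zero]

theorem bandProj_apply_le_bandProj_posPart_apply_self (u x : E) :
    bandProj u x ≤ bandProj x⁺ x :=
  ((isBandProjection_bandProj u).apply_le_posPart x).trans_eq
    (bandProj_posPart_apply_self x).symm

theorem bandProj_posPart_apply_le_apply_self {x y : E} (hyx : y ≤ x) :
    bandProj y⁺ x ≤ bandProj x⁺ x := by
  have hdisj : x⁻ ⊓ |y⁺| = 0 := by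
    rw [abs_of_nonneg (posPart_nonneg y)]
    refine le_antisymm ?_ (le_inf (negPart_nonneg x) (posPart_nonneg y))
    rw [← posPart_inf_negPart_eq_zero x, inf_comm x⁺]
    exact inf_le_inf_left _ (posPart_mono hyx)
  rw [← map_sub_posPart_negPart, bandProj_apply_eq_zero_of_inf_eq_zero (negPart_nonneg x) hdisj,
    sub_zero, bandProj_posPart_apply_self]
  exact ((isBandProjection_bandProj _).2 _ (posPart_nonneg x)).2

end BandProjection

def bandComponents {E : Type*} [Lattice E] [AddCommGroup E] [Module ℝ E] (e : E) : Set E :=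
  {x | ∃ P : Module.End ℝ E, IsBandProjection P ∧ P e = x}

/-- Freudenthal's spectral theorem. -/
theorem exists_mem_span_bandComponents_abs_sub_le {E : Type*} [ConditionallyCompleteLattice E]
    [AddCommGroup E] [IsOrderedAddMonoid E] [Module ℝ E] [PosSMulMono ℝ E] {e f : E}
    (hf : 0 ≤ f) (hfe : f ≤ e) {N : ℕ} (hN : 0 < N) :
    ∃ g ∈ Submodule.span ℝ (bandComponents e), |f - g| ≤ (N : ℝ)⁻¹ • e := by
  have he : 0 ≤ e := hf.trans hfe
  have hN' : (N : ℝ) ≠ 0 := by positivity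
  -- `P k` projects onto the band where `f ≥ (k / N) • e`; on `P k - P (k + 1)` the value of
  -- `f` lies between `(k / N) • e` and `((k + 1) / N) • e`.
  set x : ℕ → E := fun k => f - ((k : ℝ) / N) • e
  set P : ℕ → Module.End ℝ E := fun k => bandProj (x k)⁺
  have hx_succ : ∀ k, x (k + 1) = x k - (N : ℝ)⁻¹ • e := fun k => by
    simp only [x]
    rw [Nat.cast_succ, add_div, add_smul, one_div, sub_sub]
  have hP_mem : ∀ k, P k e ∈ Submodule.span ℝ (bandComponents e) := fun k =>
    Submodule.subset_span ⟨P k, isBandProjection_bandProj _, rfl⟩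
  have hP_zero : P 0 f = f := by
    simpa [P, x, posPart_eq_self.mpr hf] using bandProj_posPart_apply_self f
  have hP_top : ∀ w, 0 ≤ w → P N w = 0 := fun w hw => by
    have : (x N)⁺ = 0 := posPart_eq_zero.mpr (by simp [x, div_self hN', hfe])
    exact bandProj_apply_eq_zero_of_inf_eq_zero hw (by simp [this, inf_eq_right.mpr hw])
  refine ⟨∑ k ∈ range N, ((k : ℝ) / N) • (P k e - P (k + 1) e), Submodule.sum_mem _
    fun k _ => Submodule.smul_mem _ _ (Submodule.sub_mem _ (hP_mem k) (hP_mem _)), ?_⟩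
  have hdecomp : f - ∑ k ∈ range N, ((k : ℝ) / N) • (P k e - P (k + 1) e)
      = ∑ k ∈ range N, (P k (x k) - P (k + 1) (x k)) := by
    have hf_telescope : f = ∑ k ∈ range N, (P k f - P (k + 1) f) := by
      rw [sum_range_sub', hP_zero, hP_top f hf, sub_zero]
    conv_lhs => rw [hf_telescope]
    rw [← sum_sub_distrib]
    refine sum_congr rfl fun k _ => ?_
    simp only [x, map_sub, map_smul, smul_sub]
    abel
  have hlayer_nonneg : ∀ k, 0 ≤ P k (x k) - P (k + 1) (x k) := fun k =>
    sub_nonneg.mpr (bandProj_posPart_apply_le_apply_self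
      (by rw [hx_succ]; exact sub_le_self _ (smul_nonneg (by positivity) he)))
  have hlayer_le : ∀ k, P k (x k) - P (k + 1) (x k) ≤ (N : ℝ)⁻¹ • (P k e - P (k + 1) e) :=
    fun k => by
      have h : 0 ≤ P (k + 1) (x (k + 1)) - P k (x (k + 1)) :=
        sub_nonneg.mpr (bandProj_apply_le_bandProj_posPart_apply_self _ _)
      rw [hx_succ] at h
      rw [← sub_nonneg]
      convert h using 1
      simp only [x, map_sub, map_smul, smul_sub]
      abel
  rw [hdecomp, abs_of_nonneg (sum_nonneg fun k _ => hlayer_nonneg k)]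
  calc ∑ k ∈ range N, (P k (x k) - P (k + 1) (x k))
      ≤ ∑ k ∈ range N, (N : ℝ)⁻¹ • (P k e - P (k + 1) e) := sum_le_sum fun k _ => hlayer_le k
    _ = (N : ℝ)⁻¹ • P 0 e := by rw [← smul_sum, sum_range_sub', hP_top e he, sub_zero]
    _ ≤ (N : ℝ)⁻¹ • e :=
      smul_le_smul_of_nonneg_left ((isBandProjection_bandProj _).2 e he).2 (by positivity)

section Cesaro

variable {E : Type*} [Lattice E] [AddCommGroup E] [IsOrderedAddMonoid E] [Module ℝ E]
  [PosSMulMono ℝ E]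

noncomputable def cesaroAbs (L : ℕ → E →ₗ[ℝ] E) (f : E) (n : ℕ) : E :=
  (n : ℝ)⁻¹ • ∑ k ∈ range n, |L k f|

variable (L : ℕ → E →ₗ[ℝ] E)

theorem cesaroAbs_nonneg (f : E) (n : ℕ) : 0 ≤ cesaroAbs L f n :=
  smul_nonneg (by positivity) (sum_nonneg fun _ _ => abs_nonneg _)

theorem cesaroAbs_add_le (f g : E) (n : ℕ) :
    cesaroAbs L (f + g) n ≤ cesaroAbs L f n + cesaroAbs L g n := by
  rw [cesaroAbs, cesaroAbs, cesaroAbs, ← smul_add, ← sum_add_distrib]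
  exact smul_le_smul_of_nonneg_left (sum_le_sum fun k _ => by rw [map_add]; exact abs_add_le _ _)
    (by positivity)

theorem cesaroAbs_smul (c : ℝ) (f : E) : cesaroAbs L (c • f) = |c| • cesaroAbs L f := by
  ext n
  simp only [cesaroAbs, Pi.smul_apply, map_smul, abs_smul_eq_abs_smul_abs, ← smul_sum,
    smul_comm |c|]

theorem cesaroAbs_le {f b : E} (hb : 0 ≤ b) (hf : ∀ k, |L k f| ≤ b) (n : ℕ) :
    cesaroAbs L f n ≤ b :=
  calc cesaroAbs L f n ≤ (n : ℝ)⁻¹ • ∑ _k ∈ range n, b :=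
        smul_le_smul_of_nonneg_left (sum_le_sum fun k _ => hf k) (by positivity)
    _ = ((n : ℝ)⁻¹ * n) • b := by rw [sum_const, card_range, ← Nat.cast_smul_eq_nsmul ℝ, smul_smul]
    _ ≤ b := smul_le_of_le_one_left hb (inv_mul_le_one_of_le₀ le_rfl (Nat.cast_nonneg n))

def cesaroNull : Submodule ℝ E where
  carrier := {f | OrderConvergesTo (cesaroAbs L f) 0}
  add_mem' {f g} hf hg := (hf.add hg).of_le (cesaroAbs_nonneg L _) (cesaroAbs_add_le L f g)
  zero_mem' := by
    have : cesaroAbs L 0 = 0 := by simpa using cesaroAbs_smul L 0 0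
    show OrderConvergesTo (cesaroAbs L 0) 0
    rw [this]
    exact OrderConvergesTo.const_zero
  smul_mem' c f hf := by
    show OrderConvergesTo (cesaroAbs L (c • f)) 0
    rw [cesaroAbs_smul]
    exact hf.const_smul (abs_nonneg c)

end Cesaro

theorem mem_cesaroNull_of_abs_le {E : Type*} [ConditionallyCompleteLattice E] [AddCommGroup E]
    [IsOrderedAddMonoid E] [Module ℝ E] [PosSMulMono ℝ E] {L : ℕ → E →ₗ[ℝ] E} {e : E}
    (he : 0 ≤ e) {C : ℝ} (hC : 0 ≤ C)
    (hL : ∀ k f (c : ℝ), 0 ≤ c → |f| ≤ c • e → |L k f| ≤ (c * C) • e)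
    (hcomp : bandComponents e ⊆ cesaroNull L) {f : E} {c : ℝ} (hf : |f| ≤ c • e) :
    f ∈ cesaroNull L := by
  have hspan : Submodule.span ℝ (bandComponents e) ≤ cesaroNull L :=
    Submodule.span_le.mpr hcomp
  have hunit : ∀ h, 0 ≤ h → h ≤ e → h ∈ cesaroNull L := fun h h0 he' => by
    refine OrderConvergesTo.of_forall_le_add_inv_succ_smul (smul_nonneg hC he)
      (cesaroAbs_nonneg L h) fun j => ?_
    obtain ⟨g, hg, hhg⟩ := exists_mem_span_bandComponents_abs_sub_le h0 he' j.succ_pos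
    push_cast at hhg
    refine ⟨cesaroAbs L g, hspan hg, fun n => ?_⟩
    calc cesaroAbs L h n ≤ cesaroAbs L g n + cesaroAbs L (h - g) n := by
          simpa using cesaroAbs_add_le L g (h - g) n
      _ ≤ cesaroAbs L g n + ((j : ℝ) + 1)⁻¹ • C • e := by
          rw [← mul_smul]
          exact add_le_add le_rfl (cesaroAbs_le L (smul_nonneg (by positivity) he)
            (fun k => hL k _ _ (by positivity) hhg) n)
  set c' := max c 1
  have hc' : 0 < c' := lt_max_of_lt_right one_pos
  have hpart : ∀ h, 0 ≤ h → h ≤ |f| → h ∈ cesaroNull L := fun h h0 hh => by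
    have hle : c'⁻¹ • h ≤ e := (inv_smul_le_iff_of_pos hc').mpr
      (hh.trans (hf.trans (smul_le_smul_of_nonneg_right (le_max_left c 1) he)))
    simpa [smul_inv_smul₀ hc'.ne'] using
      (cesaroNull L).smul_mem c' (hunit _ (smul_nonneg (inv_nonneg.mpr hc'.le) h0) hle)
  rw [← posPart_sub_negPart f]
  exact (cesaroNull L).sub_mem
    (hpart _ (posPart_nonneg f) (sup_le (le_abs_self f) (abs_nonneg f)))
    (hpart _ (negPart_nonneg f) (sup_le (neg_le_abs f) (abs_nonneg f)))

theorem orderConvergesTo_cesaroAbs_of_bandComponents {E : Type*} [ConditionallyCompleteLattice E]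
    [AddCommGroup E] [IsOrderedAddMonoid E] [Module ℝ E] [PosSMulMono ℝ E] {e : E} (he : 0 ≤ e)
    (B : ℕ → E →ₗ[ℝ] E →ₗ[ℝ] E) {C : ℝ} (hC : 0 ≤ C)
    (hB : ∀ k f g (a c : ℝ), 0 ≤ a → 0 ≤ c → |f| ≤ a • e → |g| ≤ c • e →
      |B k f g| ≤ (a * c * C) • e)
    (hcomp : ∀ P Q : Module.End ℝ E, IsBandProjection P → IsBandProjection Q →
      OrderConvergesTo (cesaroAbs (fun k => B k (P e)) (Q e)) 0)
    {f g : E} {a c : ℝ} (ha : 0 ≤ a) (hf : |f| ≤ a • e) (hg : |g| ≤ c • e) :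
    OrderConvergesTo (cesaroAbs (fun k => B k f) g) 0 := by
  have hcomp_le : ∀ {x : E}, x ∈ bandComponents e → |x| ≤ (1 : ℝ) • e := by
    rintro _ ⟨P, hP, rfl⟩
    rw [one_smul, abs_of_nonneg (hP.2 e he).1]
    exact (hP.2 e he).2
  have hflip : ∀ x y, cesaroAbs (fun k => (B k).flip y) x = cesaroAbs (fun k => B k x) y :=
    fun _ _ => rfl
  -- First vary the left argument against a fixed component `Q e`, then the right one.
  have hleft : bandComponents e ⊆ cesaroNull (fun k => B k f) := by
    rintro _ ⟨Q, hQ, rfl⟩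
    have : f ∈ cesaroNull (fun k => (B k).flip (Q e)) := by
      refine mem_cesaroNull_of_abs_le he hC (fun k x c hc hx => ?_) ?_ hf
      · simpa using hB k x (Q e) c 1 hc zero_le_one hx (hcomp_le ⟨Q, hQ, rfl⟩)
      · rintro _ ⟨P, hP, rfl⟩
        show OrderConvergesTo (cesaroAbs _ _) 0
        rw [hflip]
        exact hcomp P Q hP hQ
    show OrderConvergesTo (cesaroAbs _ _) 0
    rw [← hflip]
    exact this
  refine mem_cesaroNull_of_abs_le he (mul_nonneg ha hC) (fun k y c hc hy => ?_) hleft hg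
  simpa [mul_comm a c, mul_assoc] using hB k f y a c ha hc hf hy

section Operators

variable {E : Type*} [Lattice E] [AddCommGroup E] [Module ℝ E]

theorem pow_map_sup {S : Module.End ℝ E} (hS : ∀ f g, S (f ⊔ g) = S f ⊔ S g) (k : ℕ) (f g : E) :
    (S ^ k) (f ⊔ g) = (S ^ k) f ⊔ (S ^ k) g := by
  induction k with
  | zero => simp
  | succ k ih => simp only [pow_succ', Module.End.mul_apply, ih, hS]

theorem map_abs_of_map_sup {S : Module.End ℝ E} (hS : ∀ f g, S (f ⊔ g) = S f ⊔ S g) (x : E) :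
    S |x| = |S x| := by
  rw [abs, abs, hS, map_neg]

theorem monotone_of_map_sup {S : Module.End ℝ E} (hS : ∀ f g, S (f ⊔ g) = S f ⊔ S g) :
    Monotone S := fun x y hxy => by
  rw [← sup_eq_right.mpr hxy, hS]
  exact le_sup_left

variable [IsOrderedAddMonoid E]

theorem abs_apply_le_apply_abs {T : E →ₗ[ℝ] E} (hT : ∀ x, 0 ≤ x → 0 ≤ T x) (x : E) :
    |T x| ≤ T |x| := by
  have hmono : Monotone T := OrderHomClass.mono (PositiveLinearMap.mk₀ T hT)
  exact abs_le'.mpr ⟨hmono (le_abs_self x), by rw [← map_neg]; exact hmono (neg_le_abs x)⟩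

theorem abs_apply₂_le_apply₂_abs {mul : E →ₗ[ℝ] E →ₗ[ℝ] E}
    (hmul : ∀ a b, 0 ≤ a → 0 ≤ b → 0 ≤ mul a b) (a b : E) : |mul a b| ≤ mul |a| |b| := by
  have h₁ : mul (a⁺ + a⁻) (b⁺ + b⁻) - mul (a⁺ - a⁻) (b⁺ - b⁻)
      = 2 • (mul a⁺ b⁻ + mul a⁻ b⁺) := by
    simp only [map_add, map_sub, LinearMap.add_apply, LinearMap.sub_apply, two_nsmul]
    abel
  have h₂ : mul (a⁺ + a⁻) (b⁺ + b⁻) + mul (a⁺ - a⁻) (b⁺ - b⁻)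
      = 2 • (mul a⁺ b⁺ + mul a⁻ b⁻) := by
    simp only [map_add, map_sub, LinearMap.add_apply, LinearMap.sub_apply, two_nsmul]
    abel
  simp only [posPart_add_negPart, posPart_sub_negPart] at h₁ h₂
  refine abs_le'.mpr ⟨sub_nonneg.mp ?_, neg_le_iff_add_nonneg.mpr ?_⟩
  · rw [h₁]
    exact nsmul_nonneg (add_nonneg (hmul _ _ (posPart_nonneg a) (negPart_nonneg b))
      (hmul _ _ (negPart_nonneg a) (posPart_nonneg b))) 2
  · rw [h₂]
    exact nsmul_nonneg (add_nonneg (hmul _ _ (posPart_nonneg a) (posPart_nonneg b))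
      (hmul _ _ (negPart_nonneg a) (negPart_nonneg b))) 2

theorem apply₂_le_apply₂ {mul : E →ₗ[ℝ] E →ₗ[ℝ] E} (hmul : ∀ a b, 0 ≤ a → 0 ≤ b → 0 ≤ mul a b)
    {a a' b b' : E} (ha : 0 ≤ a) (hb' : 0 ≤ b') (haa' : a ≤ a') (hbb' : b ≤ b') :
    mul a b ≤ mul a' b' := by
  have h : mul a' b' - mul a b = mul (a' - a) b' + mul a (b' - b) := by
    simp only [map_sub, LinearMap.sub_apply]
    abel
  rw [← sub_nonneg, h]
  exact add_nonneg (hmul _ _ (sub_nonneg.mpr haa') hb') (hmul _ _ ha (sub_nonneg.mpr hbb'))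

end Operators

section Mixing

variable {E : Type*} [AddCommGroup E] [Module ℝ E]

def mixingDefect (T S : Module.End ℝ E) (mul : E →ₗ[ℝ] E →ₗ[ℝ] E) (k : ℕ) :
    E →ₗ[ℝ] E →ₗ[ℝ] E :=
  (mul.compl₁₂ (S ^ k) LinearMap.id).compr₂ T - mul.compl₁₂ T T

theorem mixingDefect_apply (T S : Module.End ℝ E) (mul : E →ₗ[ℝ] E →ₗ[ℝ] E) (k : ℕ) (f g : E) :
    mixingDefect T S mul k f g = T (mul ((S ^ k) f) g) - mul (T f) (T g) :=
  rfl

variable [Lattice E] [IsOrderedAddMonoid E]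

theorem abs_mixingDefect_le {T S : Module.End ℝ E} {mul : E →ₗ[ℝ] E →ₗ[ℝ] E} {e : E}
    (hT : ∀ x, 0 ≤ x → 0 ≤ T x) (hTe : T e = e) (hS : ∀ f g, S (f ⊔ g) = S f ⊔ S g)
    (hSe : S e = e) (hmul : ∀ a b, 0 ≤ a → 0 ≤ b → 0 ≤ mul a b) (hmul_e : mul e e = e)
    (k : ℕ) {f g : E} {a c : ℝ} (hf : |f| ≤ a • e) (hg : |g| ≤ c • e) :
    |mixingDefect T S mul k f g| ≤ (a * c * 2) • e := by
  have hT_mono : Monotone T := OrderHomClass.mono (PositiveLinearMap.mk₀ T hT)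
  have hT_le : ∀ {x : E} {b : ℝ}, |x| ≤ b • e → |T x| ≤ b • e := fun hx =>
    (abs_apply_le_apply_abs hT _).trans ((hT_mono hx).trans_eq (by rw [map_smul, hTe]))
  have hmul_le : ∀ {x y : E}, |x| ≤ a • e → |y| ≤ c • e → |mul x y| ≤ (a * c) • e :=
    fun hx hy => (abs_apply₂_le_apply₂_abs hmul _ _).trans
      ((apply₂_le_apply₂ hmul (abs_nonneg _) ((abs_nonneg _).trans hy) hx hy).trans_eq
        (by rw [LinearMap.map_smul₂, map_smul, hmul_e, smul_smul, mul_comm]))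
  have hSf : |(S ^ k) f| ≤ a • e := by
    rw [← map_abs_of_map_sup (pow_map_sup hS k)]
    refine (monotone_of_map_sup (pow_map_sup hS k) hf).trans_eq ?_
    rw [map_smul, Module.End.pow_apply, Function.iterate_fixed hSe]
  rw [mixingDefect_apply, sub_eq_add_neg, mul_two, add_smul]
  exact (abs_add_le _ _).trans (add_le_add (hT_le (hmul_le hSf hg))
    ((abs_neg _).trans_le (hmul_le (hT_le hf) (hT_le hg))))

end Mixing

theorem stmt13_general {E : Type*} [ConditionallyCompleteLattice E] [AddCommGroup E]
    [CovariantClass E E (· + ·) (· ≤ ·)] [Module ℝ E] [PosSMulMono ℝ E]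
    (e : E) (he : IsWeakOrderUnit e)
    (T : Module.End ℝ E) (hT : IsConditionalExpectation T) (hTe : T e = e)
    (S : Module.End ℝ E) (hS : IsOrderContRieszHom S) (hSe : S e = e)
    (mul : E →ₗ[ℝ] E →ₗ[ℝ] E)
    (hmul_proj : ∀ P Q : Module.End ℝ E, IsBandProjection P → IsBandProjection Q →
      mul (P e) (Q e) = P (Q e))
    (hmul_pos : ∀ f g : E, 0 ≤ f → 0 ≤ g → 0 ≤ mul f g)
    (hmix : ∀ P Q : Module.End ℝ E, IsBandProjection P → IsBandProjection Q →
      OrderConvergesTo (fun n => (n : ℝ)⁻¹ • ∑ k ∈ Finset.range n,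
        |T (mul ((S ^ k) (P e)) (Q e)) - mul (T (P e)) (T (Q e))|) 0) :
    ∀ f g : E, (∃ k : ℝ, |f| ≤ k • e) → (∃ k : ℝ, |g| ≤ k • e) →
      OrderConvergesTo (fun n => (n : ℝ)⁻¹ • ∑ k ∈ Finset.range n,
        |T (mul ((S ^ k) f) g) - mul (T f) (T g)|) 0 := by
  have : IsOrderedAddMonoid E := { add_le_add_left := fun _ _ h c => add_le_add_left h c }
  have he₀ : 0 ≤ e := he.1.le
  have hone : IsBandProjection (1 : Module.End ℝ E) := ⟨mul_one 1, fun _ hf => ⟨hf, le_rfl⟩⟩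
  have hmul_e : mul e e = e := by simpa using hmul_proj 1 1 hone hone
  rintro f g ⟨a, hf⟩ ⟨c, hg⟩
  have habs : ∀ {x : E} {b : ℝ}, |x| ≤ b • e → |x| ≤ |b| • e := fun hx =>
    hx.trans (smul_le_smul_of_nonneg_right (le_abs_self _) he₀)
  exact orderConvergesTo_cesaroAbs_of_bandComponents he₀ (mixingDefect T S mul) zero_le_two
    (fun k _ _ _ _ _ _ hf hg => abs_mixingDefect_le hT.positive hTe hS.latticeHom hSe hmul_pos
      hmul_e k hf hg) hmix (abs_nonneg a) (habs hf) (habs hg)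

/-- If the conditional expectation preserving system `(E,T,S,e)` is weakly mixing (for
band projections), then the weak mixing Cesàro convergence extends to all `f, g` in the
ideal `E_e` of `e`-bounded elements, where `mul` is the `f`-algebra multiplication on
`E_e` (characterised by `Pe · Qe = PQe` and positivity). -/
theorem stmt13 {E : Type*} [ConditionallyCompleteLattice E] [AddCommGroup E]
    [CovariantClass E E (· + ·) (· ≤ ·)] [Module ℝ E] [PosSMulMono ℝ E]
    (e : E) (he : IsWeakOrderUnit e)
    (T : Module.End ℝ E) (hT : IsConditionalExpectation T) (hTe : T e = e)
    (S : Module.End ℝ E) (hS : IsOrderContRieszHom S) (hSe : S e = e)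
    (hTS : ∀ f : E, T (S f) = T f)
    (mul : E →ₗ[ℝ] E →ₗ[ℝ] E)
    (hmul_proj : ∀ P Q : Module.End ℝ E, IsBandProjection P → IsBandProjection Q →
      mul (P e) (Q e) = P (Q e))
    (hmul_pos : ∀ f g : E, 0 ≤ f → 0 ≤ g → 0 ≤ mul f g)
    (hmix : ∀ P Q : Module.End ℝ E, IsBandProjection P → IsBandProjection Q →
      OrderConvergesTo (fun n => (n : ℝ)⁻¹ • ∑ k ∈ Finset.range n,
        |T (mul ((S ^ k) (P e)) (Q e)) - mul (T (P e)) (T (Q e))|) 0) :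
    ∀ f g : E, (∃ k : ℝ, |f| ≤ k • e) → (∃ k : ℝ, |g| ≤ k • e) →
      OrderConvergesTo (fun n => (n : ℝ)⁻¹ • ∑ k ∈ Finset.range n,
        |T (mul ((S ^ k) f) g) - mul (T f) (T g)|) 0 :=
  stmt13_general e he T hT hTe S hS hSe mul hmul_proj hmul_pos hmix
end
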